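/- arXiv:1811.02398 — 2 statements merged into one kernel-verified Lean document; each statement's English description precedes it below -/
import Mathlib

section
/- Let φ and ψ(y₁,…,y_{#q}) be first-order formulas with predicate symbols such that no predicate atom with predicate symbol q occurs in ψ. For each valuation ν: if there exists an interpretation I such that I, ν ⊨ φ ∧ ⋀_{q(t₁,…,t_{#q}) occurs in φ} (q(t₁,…,t_{#q}) → ψ[t₁/y₁,…,t_{#q}/y_{#q}]), then there exists an interpretation J with J(q) ⊆ I(q), J(q') = I(q') for all predicates q' ≠ q, and J, ν ⊨ φ ∧ ∀y₁…∀y_{#q}. q(y₁,…,y_{#q}) → ψ. -/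
set_option maxHeartbeats 1000000
set_option autoImplicit false

open scoped Classical

noncomputable section

namespace FOADA

/-! ### Terms over a data domain `D` (all function symbols have a fixed interpretation) -/

inductive Term (D : Type) (V : Type) : Type where
  | var : V → Term D V
  | app : {n : ℕ} → ((Fin n → D) → D) → (Fin n → Term D V) → Term D V

namespace Term

variable {D V W : Type}

def eval (ν : V → D) : Term D V → D
  | var v => ν v
  | app f ts => f fun i => (ts i).eval ν

def rename (f : V → W) : Term D V → Term D W
  | var v => var (f v)
  | app g ts => app g fun i => (ts i).rename f

def subst (σ : V → Term D W) : Term D V → Term D W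
  | var v => σ v
  | app g ts => app g fun i => (ts i).subst σ

def vars : Term D V → Set V
  | var v => {v}
  | app _ ts => ⋃ i, (ts i).vars

def const (d : D) : Term D V := app (n := 0) (fun _ => d) Fin.elim0

end Term

/-! ### Interpretations, configurations and cubes -/

def Interp (D Q : Type) (ar : Q → ℕ) : Type := ∀ q : Q, Set (Fin (ar q) → D)

def Interp.le {D Q : Type} {ar : Q → ℕ} (I J : Interp D Q ar) : Prop := ∀ q, I q ⊆ J q

/-- Configurations `q(d₁,…,d_{#q})`. -/
def Config (D Q : Type) (ar : Q → ℕ) : Type := Σ q : Q, Fin (ar q) → D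

/-- The cube of an interpretation. -/
def Interp.cube {D Q : Type} {ar : Q → ℕ} (I : Interp D Q ar) : Set (Config D Q ar) :=
  {c | c.2 ∈ I c.1}

/-! ### First-order formulas with uninterpreted predicate symbols -/

inductive Fml (D Q : Type) (ar : Q → ℕ) : Type → Type 1 where
  | eq : {V : Type} → Term D V → Term D V → Fml D Q ar V
  | pred : {V : Type} → (q : Q) → (Fin (ar q) → Term D V) → Fml D Q ar V
  | not : {V : Type} → Fml D Q ar V → Fml D Q ar V
  | and : {V : Type} → Fml D Q ar V → Fml D Q ar V → Fml D Q ar V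
  | ex : {V : Type} → Fml D Q ar (Option V) → Fml D Q ar V

namespace Fml

variable {D Q : Type} {ar : Q → ℕ}

/-- The satisfaction relation `I, ν ⊨ φ`. -/
def Sat (I : Interp D Q ar) : {V : Type} → Fml D Q ar V → (V → D) → Prop
  | _, .eq t s, ν => t.eval ν = s.eval ν
  | _, .pred q ts, ν => (fun i => (ts i).eval ν) ∈ I q
  | _, .not φ, ν => ¬ Sat I φ ν
  | _, .and φ ψ, ν => Sat I φ ν ∧ Sat I ψ ν
  | _, .ex φ, ν => ∃ d : D, Sat I φ fun o => o.elim d ν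

def tt [Nonempty D] {V : Type} : Fml D Q ar V :=
  .eq (Term.const (Classical.arbitrary D)) (Term.const (Classical.arbitrary D))

def ff [Nonempty D] {V : Type} : Fml D Q ar V := .not tt

def or {V : Type} (φ ψ : Fml D Q ar V) : Fml D Q ar V := .not (.and (.not φ) (.not ψ))

def imp {V : Type} (φ ψ : Fml D Q ar V) : Fml D Q ar V := .not (.and φ (.not ψ))

def all {V : Type} (φ : Fml D Q ar (Option V)) : Fml D Q ar V := .not (.ex (.not φ))

def conj [Nonempty D] {V : Type} : List (Fml D Q ar V) → Fml D Q ar V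
  | [] => tt
  | φ :: l => .and φ (conj l)

def disj [Nonempty D] {V : Type} : List (Fml D Q ar V) → Fml D Q ar V
  | [] => ff
  | φ :: l => or φ (disj l)

def rename : {V W : Type} → (V → W) → Fml D Q ar V → Fml D Q ar W
  | _, _, f, .eq t s => .eq (t.rename f) (s.rename f)
  | _, _, f, .pred q ts => .pred q fun i => (ts i).rename f
  | _, _, f, .not φ => .not (rename f φ)
  | _, _, f, .and φ ψ => .and (rename f φ) (rename f ψ)
  | _, _, f, .ex φ => .ex (rename (Option.map f) φ)

def substVar : {V W : Type} → (V → Term D W) → Fml D Q ar V → Fml D Q ar W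
  | _, _, σ, .eq t s => .eq (t.subst σ) (s.subst σ)
  | _, _, σ, .pred q ts => .pred q fun i => (ts i).subst σ
  | _, _, σ, .not φ => .not (substVar σ φ)
  | _, _, σ, .and φ ψ => .and (substVar σ φ) (substVar σ ψ)
  | _, _, σ, .ex φ =>
      .ex (substVar (fun o => Option.elim o (.var none) fun v => (σ v).rename some) φ)

/-- Existential quantification of a block of variables. -/
def exN : {V : Type} → {k : ℕ} → Fml D Q ar (V ⊕ Fin k) → Fml D Q ar V
  | _, 0, φ => φ.rename (Sum.elim id Fin.elim0)
  | _, k + 1, φ =>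
      exN (k := k) (.ex (φ.rename fun v =>
        match v with
        | Sum.inl v => some (Sum.inl v)
        | Sum.inr j => Fin.lastCases none (fun i => some (Sum.inr i)) j))

/-- Universal quantification of a block of variables. -/
def allN {V : Type} {k : ℕ} (φ : Fml D Q ar (V ⊕ Fin k)) : Fml D Q ar V :=
  .not (exN (.not φ))

/-- `Polarity φ b` : every predicate occurrence in `φ` has polarity `b`
(`b = true` : under an even number of negations). -/
def Polarity : {V : Type} → Fml D Q ar V → Bool → Prop
  | _, .eq _ _, _ => True
  | _, .pred _ _, b => b = true
  | _, .not φ, b => Polarity φ (!b)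
  | _, .and φ ψ, b => Polarity φ b ∧ Polarity ψ b
  | _, .ex φ, b => Polarity φ b

/-- A formula is positive if every predicate symbol occurs under an even number of negations. -/
def Positive {V : Type} (φ : Fml D Q ar V) : Prop := φ.Polarity true

/-- Free variables of a formula. -/
def fv : {V : Type} → Fml D Q ar V → Set V
  | _, .eq t s => t.vars ∪ s.vars
  | _, .pred _ ts => ⋃ i, (ts i).vars
  | _, .not φ => fv φ
  | _, .and φ ψ => fv φ ∪ fv ψ
  | _, .ex φ => {v | some v ∈ fv φ}

/-- Predicate symbols occurring in a formula. -/
def preds : {V : Type} → Fml D Q ar V → Set Q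
  | _, .eq _ _ => ∅
  | _, .pred q _ => {q}
  | _, .not φ => preds φ
  | _, .and φ ψ => preds φ ∪ preds ψ
  | _, .ex φ => preds φ

/-- Predicate symbols occurring with polarity `b` (`true` = even number of negations). -/
def predsPol : Bool → {V : Type} → Fml D Q ar V → Set Q
  | _, _, .eq _ _ => ∅
  | b, _, .pred q _ => if b then {q} else ∅
  | b, _, .not φ => predsPol (!b) φ
  | b, _, .and φ ψ => predsPol b φ ∪ predsPol b ψ
  | b, _, .ex φ => predsPol b φ

/-- Number of predicate atom occurrences. -/
def atomCount : {V : Type} → Fml D Q ar V → ℕ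
  | _, .eq _ _ => 0
  | _, .pred _ _ => 1
  | _, .not φ => atomCount φ
  | _, .and φ ψ => atomCount φ + atomCount ψ
  | _, .ex φ => atomCount φ

/-- No predicate atom with symbol `q0` occurs. -/
def noPredOcc (q0 : Q) : {V : Type} → Fml D Q ar V → Prop
  | _, .eq _ _ => True
  | _, .pred q _ => q ≠ q0
  | _, .not φ => noPredOcc q0 φ
  | _, .and φ ψ => noPredOcc q0 φ ∧ noPredOcc q0 ψ
  | _, .ex φ => noPredOcc q0 φ

/-- The size of a formula. -/
def size : {V : Type} → Fml D Q ar V → ℕ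
  | _, .eq _ _ => 1
  | _, .pred _ _ => 1
  | _, .not φ => size φ + 1
  | _, .and φ ψ => size φ + size ψ + 1
  | _, .ex φ => size φ + 1

/-- The dual of a (positive) formula. -/
def dual : {V : Type} → Fml D Q ar V → Fml D Q ar V
  | _, .eq t s => .not (.eq t s)
  | _, .pred q ts => .pred q ts
  | _, .not φ => .not (dual φ)
  | _, .and φ ψ => or (dual φ) (dual ψ)
  | _, .ex φ => .not (.ex (.not (dual φ)))

/-- Map predicate symbols along an arity-preserving function. -/
def mapPred {Q' : Type} {ar' : Q' → ℕ} (f : Q → Q') (h : ∀ q, ar' (f q) = ar q) :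
    {V : Type} → Fml D Q ar V → Fml D Q' ar' V
  | _, .eq t s => .eq t s
  | _, .pred q ts => .pred (f q) fun i => ts (Fin.cast (h q) i)
  | _, .not φ => .not (mapPred f h φ)
  | _, .and φ ψ => .and (mapPred f h φ) (mapPred f h ψ)
  | _, .ex φ => .ex (mapPred f h φ)

/-- Substitute, for every predicate atom `q(t̄)`, the formula `σ q` with parameters
instantiated by `t̄` (plus a fixed set `V0` of "global" variables embedded by `ρ`). -/
def substPred {Q' : Type} {ar' : Q' → ℕ} {V0 : Type}
    (σ : ∀ q : Q, Fml D Q' ar' (V0 ⊕ Fin (ar q))) :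
    {V : Type} → (V0 → V) → Fml D Q ar V → Fml D Q' ar' V
  | _, _, .eq t s => .eq t s
  | _, ρ, .pred q ts => (σ q).substVar (Sum.elim (fun v0 => .var (ρ v0)) fun i => ts i)
  | _, ρ, .not φ => .not (substPred σ ρ φ)
  | _, ρ, .and φ ψ => .and (substPred σ ρ φ) (substPred σ ρ ψ)
  | _, ρ, .ex φ => .ex (substPred σ (fun v0 => some (ρ v0)) φ)

/-- Replace, in place, every atom of the single predicate `q0` by the instance of `ψ`;
all other predicate atoms are kept. -/
def replaceP [DecidableEq Q] (q0 : Q) {V0 : Type} (ψ : Fml D Q ar (V0 ⊕ Fin (ar q0))) :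
    {V : Type} → (V0 → V) → Fml D Q ar V → Fml D Q ar V
  | _, _, .eq t s => .eq t s
  | _, ρ, .pred q ts =>
      if h : q = q0 then
        ψ.substVar (Sum.elim (fun v0 => .var (ρ v0))
          fun i => ts (Fin.cast (congrArg ar h.symm) i))
      else .pred q ts
  | _, ρ, .not φ => .not (replaceP q0 ψ ρ φ)
  | _, ρ, .and φ ψ' => .and (replaceP q0 ψ ρ φ) (replaceP q0 ψ ρ ψ')
  | _, ρ, .ex φ => .ex (replaceP q0 ψ (fun v0 => some (ρ v0)) φ)

end Fml

/-- Minimal models of a formula under a valuation. -/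
def MinModels {D Q : Type} {ar : Q → ℕ} {V : Type} (φ : Fml D Q ar V) (ν : V → D) :
    Set (Interp D Q ar) :=
  {I | φ.Sat I ν ∧ ∀ J : Interp D Q ar, φ.Sat J ν → J.le I → J = I}


/-! ### Polarity lemmas (used to discharge positivity side conditions) -/

namespace Fml

variable {D Q : Type} {ar : Q → ℕ}

theorem polarity_tt [Nonempty D] {V : Type} (_b : Bool) : (tt : Fml D Q ar V).Polarity _b :=
  trivial

theorem polarity_ff [Nonempty D] {V : Type} (_b : Bool) : (ff : Fml D Q ar V).Polarity _b :=
  trivial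

theorem polarity_or {V : Type} {φ ψ : Fml D Q ar V} {b : Bool}
    (h1 : φ.Polarity b) (h2 : ψ.Polarity b) : (or φ ψ).Polarity b := by
  simpa [or, Polarity, Bool.not_not] using And.intro h1 h2

theorem polarity_conj [Nonempty D] {V : Type} :
    ∀ (l : List (Fml D Q ar V)) (b : Bool), (∀ φ ∈ l, φ.Polarity b) → (conj l).Polarity b
  | [], _, _ => trivial
  | φ :: l, b, h =>
      ⟨h φ (List.mem_cons_self),
        polarity_conj l b fun ψ hψ => h ψ (List.mem_cons_of_mem _ hψ)⟩

theorem polarity_disj [Nonempty D] {V : Type} :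
    ∀ (l : List (Fml D Q ar V)) (b : Bool), (∀ φ ∈ l, φ.Polarity b) → (disj l).Polarity b
  | [], _, _ => trivial
  | φ :: l, b, h =>
      polarity_or (h φ (List.mem_cons_self))
        (polarity_disj l b fun ψ hψ => h ψ (List.mem_cons_of_mem _ hψ))

theorem polarity_rename :
    ∀ {V W : Type} (f : V → W) (φ : Fml D Q ar V) (b : Bool),
      φ.Polarity b → (φ.rename f).Polarity b
  | _, _, _, .eq _ _, _, _ => trivial
  | _, _, _, .pred _ _, _, hb => hb
  | _, _, f, .not φ, b, hb => polarity_rename f φ (!b) hb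
  | _, _, f, .and φ ψ, b, hb =>
      ⟨polarity_rename f φ b hb.1, polarity_rename f ψ b hb.2⟩
  | _, _, f, .ex φ, b, hb => polarity_rename (Option.map f) φ b hb

theorem polarity_mapPred {Q' : Type} {ar' : Q' → ℕ} (f : Q → Q') (h : ∀ q, ar' (f q) = ar q) :
    ∀ {V : Type} (φ : Fml D Q ar V) (b : Bool), φ.Polarity b → (φ.mapPred f h).Polarity b
  | _, .eq _ _, _, _ => trivial
  | _, .pred _ _, _, hb => hb
  | _, .not φ, b, hb => polarity_mapPred f h φ (!b) hb
  | _, .and φ ψ, b, hb =>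
      ⟨polarity_mapPred f h φ b hb.1, polarity_mapPred f h ψ b hb.2⟩
  | _, .ex φ, b, hb => polarity_mapPred f h φ b hb

theorem polarity_dual :
    ∀ {V : Type} (φ : Fml D Q ar V) (b : Bool), φ.Polarity b → (φ.dual).Polarity b
  | _, .eq _ _, _, _ => trivial
  | _, .pred _ _, _, hb => hb
  | _, .not φ, b, hb => polarity_dual φ (!b) hb
  | _, .and φ ψ, b, hb => by
      have h1 := polarity_dual φ b hb.1
      have h2 := polarity_dual ψ b hb.2
      simpa [dual, or, Polarity, Bool.not_not] using And.intro h1 h2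
  | _, .ex φ, b, hb => by
      have h := polarity_dual φ b hb
      simpa [dual, Polarity, Bool.not_not] using h

end Fml

/-! ### First-order alternating automata -/

/-- Data words over input events `Sig` and input variables `X`. -/
abbrev DWord (Sig X D : Type) := List (Sig × (X → D))

/-- A first-order alternating automaton `A = ⟨Σ, X, Q, ι, F, Δ⟩`.  The (finitely many)
control predicates are the inhabitants of `Q`, enumerated by `QList`; there is exactly one
transition rule `q(y₁,…,y_{#q}) →^{a(X)} δ q a` per pair `(q,a)` (several rules can be
joined by disjunction, a missing rule is an unsatisfiable one). -/
structure FOAA (Sig X D : Type) : Type 1 where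
  Q : Type
  QList : List Q
  QList_mem : ∀ q : Q, q ∈ QList
  ar : Q → ℕ
  init : Fml D Q ar Empty
  init_pos : init.Positive
  F : Set Q
  delta : (q : Q) → Sig → Fml D Q ar (X ⊕ Fin (ar q))
  delta_pos : ∀ q a, (delta q a).Positive

namespace FOAA

variable {Sig X D : Type} (A : FOAA Sig X D)

abbrev Cfg := Config D A.Q A.ar

/-- An execution of `A` over the data word `w`, starting with the cube `c`, represented as
the (prefix-closed) set of its paths of configurations.  The children of each node at
level `j < |w|` form a cube of a minimal model of the corresponding transition formula. -/
structure IsExec (w : DWord Sig X D) (c : Set A.Cfg) (T : Set (List A.Cfg)) : Prop where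
  not_nil : [] ∉ T
  prefix_closed : ∀ p ∈ T, ∀ p' : List A.Cfg, p' ≠ [] → p' <+: p → p' ∈ T
  roots : {cf : A.Cfg | [cf] ∈ T} = c
  depth : ∀ p ∈ T, p.length ≤ w.length + 1
  children : ∀ (p : List A.Cfg) (q : A.Q) (d : Fin (A.ar q) → D),
    p ++ [⟨q, d⟩] ∈ T → ∀ hl : p.length < w.length,
    ∃ I ∈ MinModels (A.delta q (w.get ⟨p.length, hl⟩).1)
        (Sum.elim (w.get ⟨p.length, hl⟩).2 d),
      {cf : A.Cfg | (p ++ [⟨q, d⟩]) ++ [cf] ∈ T} = I.cube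

/-- An accepting execution: all paths have length `|w|` and the frontier is labeled with
final configurations. -/
structure IsAccExec (w : DWord Sig X D) (c : Set A.Cfg) (T : Set (List A.Cfg))
    extends A.IsExec w c T : Prop where
  total : ∀ p ∈ T, p.length ≤ w.length → ∃ cf : A.Cfg, p ++ [cf] ∈ T
  final : ∀ (p : List A.Cfg) (q : A.Q) (d : Fin (A.ar q) → D),
    p ++ [⟨q, d⟩] ∈ T → p.length = w.length → q ∈ A.F

/-- `A` accepts `w` iff it has an accepting execution over `w` starting with a cube of a
minimal model of the initial sentence. -/
def Accepts (w : DWord Sig X D) : Prop :=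
  ∃ I ∈ MinModels A.init (fun v : Empty => v.elim),
    ∃ T : Set (List A.Cfg), A.IsAccExec w I.cube T

def Lang : Set (DWord Sig X D) := {w | A.Accepts w}

end FOAA

/-! ### Time-stamping and path formulas -/

/-- Time-stamping of predicate symbols : `φ⁽ⁱ⁾`. -/
def stampF {D Q : Type} {ar : Q → ℕ} (i : ℕ) :
    {V : Type} → Fml D Q ar V → Fml D (ℕ × Q) (fun p => ar p.2) V
  | _, .eq t s => .eq t s
  | _, .pred q ts => .pred (i, q) ts
  | _, .not φ => .not (stampF i φ)
  | _, .and φ ψ => .and (stampF i φ) (stampF i ψ)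
  | _, .ex φ => .ex (stampF i φ)

/-- The valuation `w_D` of the time-stamped input variables `x⁽ⁱ⁾ ↦ νᵢ(x)`. -/
def wD {Sig X D : Type} [Nonempty D] (w : DWord Sig X D) : (ℕ × X) → D := fun p =>
  if h : 1 ≤ p.1 ∧ p.1 - 1 < w.length then (w.get ⟨p.1 - 1, h.2⟩).2 p.2
  else Classical.arbitrary D

namespace FOAA

variable {Sig X D : Type} (A : FOAA Sig X D)

/-- The time-stamped right-hand side `ψ⁽ⁱ⁾` of the transition rule for `(q, a)`. -/
def ruleF (i : ℕ) (q : A.Q) (a : Sig) :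
    Fml D (ℕ × A.Q) (fun p => A.ar p.2) ((ℕ × X) ⊕ Fin (A.ar q)) :=
  (stampF i (A.delta q a)).rename (Sum.map (fun x => (i, x)) id)

/-- `⋀_{q(ȳ) →^{a(X)} ψ ∈ Δ} ∀ȳ. q⁽ᵏ⁾(ȳ) → ψ⁽ᵏ⁺¹⁾`. -/
def stepFml [Nonempty D] (k : ℕ) (a : Sig) :
    Fml D (ℕ × A.Q) (fun p => A.ar p.2) (ℕ × X) :=
  Fml.conj <| A.QList.map fun q =>
    Fml.allN (Fml.imp (.pred (k, q) fun i => .var (Sum.inr i)) (A.ruleF (k + 1) q a))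

/-- `⋀_{q ∈ Q∖F} ∀ȳ. q⁽ⁿ⁾(ȳ) → ⊥`. -/
def finalFml [Nonempty D] (n : ℕ) : Fml D (ℕ × A.Q) (fun p => A.ar p.2) (ℕ × X) :=
  Fml.conj <| A.QList.map fun q =>
    if q ∈ A.F then Fml.tt
    else Fml.allN (Fml.imp (.pred (n, q) fun i => .var (Sum.inr i)) Fml.ff)

/-- The path formula `Θ(α)`. -/
def theta [Nonempty D] (α : List Sig) : Fml D (ℕ × A.Q) (fun p => A.ar p.2) (ℕ × X) :=
  .and ((stampF 0 A.init).rename fun v : Empty => v.elim)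
    (Fml.conj <| (List.finRange α.length).map fun j => A.stepFml j.val (α.get j))

/-- The acceptance formula `Υ(α)`. -/
def upsilon [Nonempty D] (α : List Sig) : Fml D (ℕ × A.Q) (fun p => A.ar p.2) (ℕ × X) :=
  .and (A.theta α) (A.finalFml α.length)

/-- The interpretation `I_T` of the time-stamped predicates associated with an execution
(represented by its set of paths). -/
def execInterp (T : Set (List A.Cfg)) : Interp D (ℕ × A.Q) (fun p => A.ar p.2) :=
  fun p => {d | ∃ pf : List A.Cfg, pf.length = p.1 ∧ pf ++ [⟨p.2, d⟩] ∈ T}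

end FOAA

/-! ### Predicate-free acceptance formulas `Φ̂(α)` -/

namespace FOAA

variable {Sig X D : Type} (A : FOAA Sig X D)

/-- `Φ̂ₙ(αᵢ)` for `i = α.length` : obtained from `ι⁽⁰⁾` by repeatedly substituting, for every
predicate atom `q⁽ⁱ⁻¹⁾(t̄)`, the formula `ψ⁽ⁱ⁾[t̄/ȳ]` of the corresponding transition rule.
Since all predicate atoms of the `i`-th formula carry the stamp `i`, the stamps of
predicates are kept implicit. -/
def phiHatN [Nonempty D] (α : List Sig) : Fml D A.Q A.ar (ℕ × X) :=
  (List.finRange α.length).foldl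
    (fun acc j =>
      Fml.substPred
        (fun q => (A.delta q (α.get j)).rename (Sum.map (fun x => (j.val + 1, x)) id))
        id acc)
    (A.init.rename fun v : Empty => v.elim)

/-- `Φ̂(α)` : additionally replace every remaining atom `q⁽ⁿ⁾(t̄)` by `⊥` if `q ∉ F` and by
`⊤` if `q ∈ F`.  The result contains no predicate symbols. -/
def phiHat [Nonempty D] (α : List Sig) :
    Fml D Empty (fun e => e.elim) (ℕ × X) :=
  Fml.substPred (fun q => if q ∈ A.F then Fml.tt else Fml.ff) id (A.phiHatN α)

end FOAA

/-- The unique interpretation over an empty set of predicate symbols. -/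
def emptyInterp (D : Type) : Interp D Empty (fun e => e.elim) := fun q => q.elim

/-! ### Size, intersection and complementation of automata -/

namespace FOAA

variable {Sig X D : Type}

/-- `|A| = |ι| + Σ_{rules} |ψ|`. -/
def size [Fintype Sig] (A : FOAA Sig X D) : ℕ :=
  A.init.size + (A.QList.map fun q => ∑ a : Sig, (A.delta q a).size).sum

/-- The intersection automaton `A∩` (disjointness of the predicate sets is modeled by a sum
type). -/
def inter (A₁ A₂ : FOAA Sig X D) : FOAA Sig X D where
  Q := A₁.Q ⊕ A₂.Q
  QList := A₁.QList.map Sum.inl ++ A₂.QList.map Sum.inr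
  QList_mem := by
    intro q
    cases q with
    | inl q => exact List.mem_append_left _ (List.mem_map_of_mem (A₁.QList_mem q))
    | inr q => exact List.mem_append_right _ (List.mem_map_of_mem (A₂.QList_mem q))
  ar := Sum.elim A₁.ar A₂.ar
  init := .and (Fml.mapPred Sum.inl (fun _ => rfl) A₁.init)
               (Fml.mapPred Sum.inr (fun _ => rfl) A₂.init)
  init_pos := by
    exact ⟨Fml.polarity_mapPred (Q' := A₁.Q ⊕ A₂.Q) (ar' := Sum.elim A₁.ar A₂.ar)
        Sum.inl (fun _ => rfl) A₁.init true A₁.init_pos,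
      Fml.polarity_mapPred (Q' := A₁.Q ⊕ A₂.Q) (ar' := Sum.elim A₁.ar A₂.ar)
        Sum.inr (fun _ => rfl) A₂.init true A₂.init_pos⟩
  F := Sum.inl '' A₁.F ∪ Sum.inr '' A₂.F
  delta := fun q a =>
    match q with
    | Sum.inl q₁ => Fml.mapPred Sum.inl (fun _ => rfl) (A₁.delta q₁ a)
    | Sum.inr q₂ => Fml.mapPred Sum.inr (fun _ => rfl) (A₂.delta q₂ a)
  delta_pos := by
    intro q a
    cases q with
    | inl q₁ =>
        exact Fml.polarity_mapPred (Q' := A₁.Q ⊕ A₂.Q) (ar' := Sum.elim A₁.ar A₂.ar)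
          Sum.inl (fun _ => rfl) (A₁.delta q₁ a) true (A₁.delta_pos q₁ a)
    | inr q₂ =>
        exact Fml.polarity_mapPred (Q' := A₁.Q ⊕ A₂.Q) (ar' := Sum.elim A₁.ar A₂.ar)
          Sum.inr (fun _ => rfl) (A₂.delta q₂ a) true (A₂.delta_pos q₂ a)

/-- The dual automaton `Ā`. -/
def dualA (A : FOAA Sig X D) : FOAA Sig X D where
  Q := A.Q
  QList := A.QList
  QList_mem := A.QList_mem
  ar := A.ar
  init := A.init.dual
  init_pos := Fml.polarity_dual A.init true A.init_pos
  F := A.Fᶜ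
  delta := fun q a => (A.delta q a).dual
  delta_pos := fun q a => Fml.polarity_dual (A.delta q a) true (A.delta_pos q a)

end FOAA

/-! ### Quantifier-free formulas and prenex forms -/

inductive QF (D Q : Type) (ar : Q → ℕ) (V : Type) : Type where
  | eq : Term D V → Term D V → QF D Q ar V
  | pred : (q : Q) → (Fin (ar q) → Term D V) → QF D Q ar V
  | not : QF D Q ar V → QF D Q ar V
  | and : QF D Q ar V → QF D Q ar V → QF D Q ar V

namespace QF

variable {D Q : Type} {ar : Q → ℕ} {V W : Type}

def Sat (I : Interp D Q ar) : QF D Q ar V → (V → D) → Prop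
  | .eq t s, ν => t.eval ν = s.eval ν
  | .pred q ts, ν => (fun i => (ts i).eval ν) ∈ I q
  | .not φ, ν => ¬ Sat I φ ν
  | .and φ ψ, ν => Sat I φ ν ∧ Sat I ψ ν

def rename (f : V → W) : QF D Q ar V → QF D Q ar W
  | .eq t s => .eq (t.rename f) (s.rename f)
  | .pred q ts => .pred q fun i => (ts i).rename f
  | .not φ => .not (φ.rename f)
  | .and φ ψ => .and (φ.rename f) (ψ.rename f)

def subst (σ : V → Term D W) : QF D Q ar V → QF D Q ar W
  | .eq t s => .eq (t.subst σ) (s.subst σ)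
  | .pred q ts => .pred q fun i => (ts i).subst σ
  | .not φ => .not (φ.subst σ)
  | .and φ ψ => .and (φ.subst σ) (ψ.subst σ)

def imp (φ ψ : QF D Q ar V) : QF D Q ar V := .not (.and φ (.not ψ))

def toFml : QF D Q ar V → Fml D Q ar V
  | .eq t s => .eq t s
  | .pred q ts => .pred q ts
  | .not φ => .not φ.toFml
  | .and φ ψ => .and φ.toFml ψ.toFml

/-- The list of predicate atoms occurring in a quantifier-free formula. -/
def atoms : QF D Q ar V → List (Σ q : Q, Fin (ar q) → Term D V)
  | .eq _ _ => []
  | .pred q ts => [⟨q, ts⟩]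
  | .not φ => φ.atoms
  | .and φ ψ => φ.atoms ++ ψ.atoms

def fv : QF D Q ar V → Set V
  | .eq t s => t.vars ∪ s.vars
  | .pred _ ts => ⋃ i, (ts i).vars
  | .not φ => φ.fv
  | .and φ ψ => φ.fv ∪ ψ.fv

def predsPol (b : Bool) : QF D Q ar V → Set Q
  | .eq _ _ => ∅
  | .pred q _ => if b then {q} else ∅
  | .not φ => φ.predsPol (!b)
  | .and φ ψ => φ.predsPol b ∪ ψ.predsPol b

def Polarity : QF D Q ar V → Bool → Prop
  | .eq _ _, _ => True
  | .pred _ _, b => b = true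
  | .not φ, b => φ.Polarity (!b)
  | .and φ ψ, b => φ.Polarity b ∧ ψ.Polarity b

def Positive (φ : QF D Q ar V) : Prop := φ.Polarity true

/-- In-place replacement of the atoms of predicate `q0` by instances of a formula. -/
def replaceAtom [DecidableEq Q] (q0 : Q) (χ : (Fin (ar q0) → Term D V) → Fml D Q ar V) :
    QF D Q ar V → Fml D Q ar V
  | .eq t s => .eq t s
  | .pred q ts =>
      if h : q = q0 then χ (fun i => ts (Fin.cast (congrArg ar h.symm) i))
      else .pred q ts
  | .not φ => .not (replaceAtom q0 χ φ)
  | .and φ ψ => .and (replaceAtom q0 χ φ) (replaceAtom q0 χ ψ)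

end QF

/-- Semantics of a quantifier prefix : the `j`-th entry of `pre` binds the prenex variable
of index `j` (`true` = ∃, `false` = ∀). -/
def quantSem {D : Type} : List Bool → ℕ → ((ℕ → D) → Prop) → (ℕ → D) → Prop
  | [], _, P, g => P g
  | b :: rest, j, P, g =>
      if b then ∃ d : D, quantSem rest (j + 1) P (Function.update g j d)
      else ∀ d : D, quantSem rest (j + 1) P (Function.update g j d)

/-- A formula in prenex form: a quantifier prefix binding the prenex variables
(the `ℕ` summand of the variables of the matrix). -/
structure PF (D Q : Type) (ar : Q → ℕ) (V : Type) : Type where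
  pre : List Bool
  mat : QF D Q ar (V ⊕ ℕ)

namespace PF

variable {D Q : Type} {ar : Q → ℕ} {V : Type}

def Sat [Nonempty D] (I : Interp D Q ar) (φ : PF D Q ar V) (ν : V → D) : Prop :=
  quantSem φ.pre 0 (fun g => φ.mat.Sat I (Sum.elim ν g)) fun _ => Classical.arbitrary D

end PF

/-- Prenex normal form. -/
def prenex {D Q : Type} {ar : Q → ℕ} : {V : Type} → Fml D Q ar V → PF D Q ar V
  | _, .eq t s => ⟨[], .eq (t.rename Sum.inl) (s.rename Sum.inl)⟩
  | _, .pred q ts => ⟨[], .pred q fun i => (ts i).rename Sum.inl⟩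
  | _, .not φ =>
      let p := prenex φ
      ⟨p.pre.map (!·), .not p.mat⟩
  | _, .and φ ψ =>
      let p := prenex φ
      let r := prenex ψ
      ⟨p.pre ++ r.pre, .and p.mat (r.mat.rename (Sum.map id (· + p.pre.length)))⟩
  | _, .ex φ =>
      let p := prenex φ
      ⟨true :: p.pre,
        p.mat.rename fun v =>
          match v with
          | Sum.inl (some x) => Sum.inl x
          | Sum.inl none => Sum.inr 0
          | Sum.inr j => Sum.inr (j + 1)⟩

/-! ### The path-quantifier-eliminated acceptance formula `Θ̂(α)` -/

namespace FOAA

variable {Sig X D : Type} (A : FOAA Sig X D)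

/-- One stage of the construction of `Θ̂ₙ` : conjoin, for every atom `q⁽ʲ⁾(t̄)` occurring in
the matrix so far, the instance `q⁽ʲ⁾(t̄) → ψ⁽ʲ⁺¹⁾[t̄/ȳ]` of the corresponding transition
rule for the letter `a`, prenexing the transition quantifiers of `ψ` on the fly. -/
def stepPF (j : ℕ) (a : Sig) (Θ : PF D (ℕ × A.Q) (fun p => A.ar p.2) (ℕ × X)) :
    PF D (ℕ × A.Q) (fun p => A.ar p.2) (ℕ × X) :=
  (Θ.mat.atoms.filter fun atm => atm.1.1 == j).foldl
    (fun acc atm =>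
      let pψ := prenex (A.ruleF (j + 1) atm.1.2 a)
      let m' : QF D (ℕ × A.Q) (fun p => A.ar p.2) ((ℕ × X) ⊕ ℕ) :=
        pψ.mat.subst fun v =>
          match v with
          | Sum.inl (Sum.inl x) => Term.var (Sum.inl x)
          | Sum.inl (Sum.inr i) => atm.2 i
          | Sum.inr jj => Term.var (Sum.inr (jj + acc.pre.length))
      ⟨acc.pre ++ pψ.pre, .and acc.mat (QF.imp (.pred atm.1 atm.2) m')⟩)
    Θ

/-- `Θ̂ₙ(αᵢ)` for a prefix length `i ≤ |α|`. -/
def thetaHatStage (α : List Sig) (i : ℕ) : PF D (ℕ × A.Q) (fun p => A.ar p.2) (ℕ × X) :=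
  ((List.finRange α.length).take i).foldl
    (fun acc j => A.stepPF j.val (α.get j) acc)
    (prenex ((stampF 0 A.init).rename fun v : Empty => v.elim))

/-- `Θ̂ₙ(αₙ)`. -/
def thetaHatN (α : List Sig) : PF D (ℕ × A.Q) (fun p => A.ar p.2) (ℕ × X) :=
  A.thetaHatStage α α.length

/-- `Θ̂(α)`, in prenex form : `Θ̂ₙ(αₙ)` conjoined with the instances
`q⁽ⁿ⁾(t̄) → ⊥` for the occurring atoms with `q ∈ Q∖F`. -/
def thetaHat [Nonempty D] (α : List Sig) : PF D (ℕ × A.Q) (fun p => A.ar p.2) (ℕ × X) :=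
  let Θ := A.thetaHatN α
  ⟨Θ.pre,
    (Θ.mat.atoms.filter fun atm => atm.1.1 == α.length).foldl
      (fun m atm =>
        if atm.1.2 ∈ A.F then m
        else .and m (QF.imp (.pred atm.1 atm.2)
          (.not (.eq (Term.const (Classical.arbitrary D)) (Term.const (Classical.arbitrary D))))))
      Θ.mat⟩

/-- The length of the quantifier prefix of `Θ̂ₙ(αᵢ)`. -/
def stagePreLen (α : List Sig) (i : ℕ) : ℕ := (A.thetaHatStage α i).pre.length

/-- `ξ` : the monotonic function mapping each transition quantifier of `Θ̂(α)` to the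
minimal stage of the sequence `Θ̂ₙ(α₀), …, Θ̂ₙ(αₙ)` where it occurs. -/
def xi (α : List Sig) (j : ℕ) : ℕ := sInf {i : ℕ | j < A.stagePreLen α i}

/-- `ξ⁻¹max(k)` : the maximal quantifier index mapped by `ξ` to the stage `k`. -/
def xiInvMax (α : List Sig) (k : ℕ) : ℕ :=
  sSup {j : ℕ | j < (A.thetaHatN α).pre.length ∧ A.xi α j = k}

end FOAA

/-! ### Generalized Lyndon interpolants -/

namespace FOAA

variable {Sig X D : Type} (A : FOAA Sig X D)

/-- A generalized Lyndon interpolant (GLI) for the input event sequence `α`;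
the formulas `Is k` live over an ambient variable type `W` into which the time-stamped
input variables are embedded by `ρ`. -/
structure IsGLI [Nonempty D] (α : List Sig) {W : Type} (ρ : (ℕ × X) → W)
    (Is : ℕ → Fml D (ℕ × A.Q) (fun p => A.ar p.2) W) : Prop where
  neg_free : ∀ k ≤ α.length, (Is k).predsPol false = ∅
  init_entail : ∀ (I : Interp D (ℕ × A.Q) (fun p => A.ar p.2)) (ν : W → D),
    (((stampF 0 A.init).rename (fun v : Empty => v.elim) : Fml D (ℕ × A.Q) _ W)).Sat I ν →
    (Is 0).Sat I ν
  step_entail : ∀ (k : Fin α.length) (I : Interp D (ℕ × A.Q) (fun p => A.ar p.2)) (ν : W → D),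
    (Is k.val).Sat I ν → ((A.stepFml k.val (α.get k)).rename ρ).Sat I ν →
    (Is (k.val + 1)).Sat I ν
  final_unsat : ¬ ∃ (I : Interp D (ℕ × A.Q) (fun p => A.ar p.2)) (ν : W → D),
    (Is α.length).Sat I ν ∧ ((A.finalFml α.length).rename ρ).Sat I ν

/-! ### Unfoldings -/

/-- `⋀_{q ∈ Q∖F} ∀ȳ. q(ȳ) → ⊥` over the plain (un-stamped) signature. -/
def finalConstraint [Nonempty D] : Fml D A.Q A.ar Empty :=
  Fml.conj <| A.QList.map fun q =>
    if q ∈ A.F then Fml.tt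
    else Fml.allN (Fml.imp (.pred q fun i => .var (Sum.inr i)) Fml.ff)

/-- An unfolding of `A` : a finite, prefix-closed and complete set `dom ⊆ Σ*` labeled with
positive sentences, compatible with the transition relation. -/
structure IsUnfolding [Nonempty D] (dom : Set (List Sig))
    (lab : List Sig → Fml D A.Q A.ar Empty) : Prop where
  finite : dom.Finite
  prefix_closed : ∀ α ∈ dom, ∀ β : List Sig, β <+: α → β ∈ dom
  complete : ∀ α ∈ dom, ∃ a : Sig, ((α ++ [a]) ∈ dom ↔ ∀ b : Sig, α ++ [b] ∈ dom)
  pos : ∀ α ∈ dom, (lab α).Positive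
  init_lab : ∀ (I : Interp D A.Q A.ar) (ν : Empty → D), (lab []).Sat I ν ↔ A.init.Sat I ν
  step : ∀ α ∈ dom, ∀ a : Sig, (α ++ [a]) ∈ dom →
    ∀ (I : Interp D (ℕ × A.Q) (fun p => A.ar p.2)) (ν : (ℕ × X) → D),
      (((stampF 0 (lab α)).rename (fun v : Empty => v.elim) :
          Fml D (ℕ × A.Q) _ (ℕ × X))).Sat I ν →
      (A.stepFml 0 a).Sat I ν →
      (((stampF 1 (lab (α ++ [a]))).rename (fun v : Empty => v.elim) :
          Fml D (ℕ × A.Q) _ (ℕ × X))).Sat I ν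

/-- A safe unfolding. -/
def UnfSafe [Nonempty D] (dom : Set (List Sig))
    (lab : List Sig → Fml D A.Q A.ar Empty) : Prop :=
  ∀ α ∈ dom, ¬ ∃ (I : Interp D A.Q A.ar) (ν : Empty → D),
    (lab α).Sat I ν ∧ (A.finalConstraint).Sat I ν

/-- `α` is covered by `β`. -/
def Covers (dom : Set (List Sig)) (lab : List Sig → Fml D A.Q A.ar Empty)
    (α β : List Sig) : Prop :=
  β ∈ dom ∧ ∃ α' : List Sig, α' <+: α ∧ α' ∈ dom ∧
    ∀ (I : Interp D A.Q A.ar) (ν : Empty → D), (lab α').Sat I ν → (lab β).Sat I ν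

def CoveredNode (dom : Set (List Sig)) (lab : List Sig → Fml D A.Q A.ar Empty)
    (α : List Sig) : Prop :=
  ∃ β, A.Covers dom lab α β

/-- A closed unfolding : every leaf is covered by an uncovered node. -/
def UnfClosed (dom : Set (List Sig)) (lab : List Sig → Fml D A.Q A.ar Empty) : Prop :=
  ∀ α ∈ dom, (∀ a : Sig, (α ++ [a]) ∉ dom) →
    ∃ β, A.Covers dom lab α β ∧ ¬ A.CoveredNode dom lab β

end FOAA

/-- Existentially quantify the (finitely many) variables listed in `L`, yielding a
sentence. -/
def exClose {D Q : Type} {ar : Q → ℕ} [Nonempty D] {V : Type} [DecidableEq V]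
    (L : List V) (φ : Fml D Q ar V) : Fml D Q ar Empty :=
  Fml.exN (k := L.length)
    (φ.substVar fun v =>
      if hv : v ∈ L then Term.var (Sum.inr ⟨L.idxOf v, List.idxOf_lt_length_iff.mpr hv⟩)
      else Term.const (Classical.arbitrary D))

/-! ### Timed automata -/

/-- Clock constraints over `k` clocks. -/
inductive CC (k : ℕ) : Type where
  | le : Fin k → ℚ → CC k
  | ge : Fin k → ℚ → CC k
  | not : CC k → CC k
  | and : CC k → CC k → CC k

namespace CC

def sat {k : ℕ} (γ : Fin k → ℝ) : CC k → Prop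
  | .le i c => γ i ≤ (c : ℝ)
  | .ge i c => (c : ℝ) ≤ γ i
  | .not δ => ¬ sat γ δ
  | .and δ₁ δ₂ => sat γ δ₁ ∧ sat γ δ₂

/-- Translate a clock constraint into a first-order formula over ℝ, applied to the given
argument terms (the order relations are expressed via interpreted functions and equality
atoms). -/
def toFml {k : ℕ} {Q : Type} {ar : Q → ℕ} {V : Type} :
    CC k → (Fin k → Term ℝ V) → Fml ℝ Q ar V
  | .le i c, args =>
      .eq (Term.app (n := 1) (fun v => if v 0 ≤ (c : ℝ) then 1 else 0) ![args i])
        (Term.const 1)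
  | .ge i c, args =>
      .eq (Term.app (n := 1) (fun v => if (c : ℝ) ≤ v 0 then 1 else 0) ![args i])
        (Term.const 1)
  | .not δ, args => .not (δ.toFml args)
  | .and δ₁ δ₂, args => .and (δ₁.toFml args) (δ₂.toFml args)

/-- `CC.toFml` contains no predicate symbols, hence has any polarity. -/
theorem polarity_toFml {k : ℕ} {Q : Type} {ar : Q → ℕ} {V : Type} :
    ∀ (δ : CC k) (args : Fin k → Term ℝ V) (b : Bool),
      (δ.toFml (Q := Q) (ar := ar) args).Polarity b
  | .le _ _, _, _ => trivial
  | .ge _ _, _, _ => trivial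
  | .not δ, args, b => polarity_toFml δ args (!b)
  | .and δ₁ δ₂, args, b => ⟨polarity_toFml δ₁ args b, polarity_toFml δ₂ args b⟩

end CC

/-- A timed automaton with `k` clocks. -/
structure TimedAuto (Sig : Type) (k : ℕ) : Type 1 where
  S : Type
  SList : List S
  SList_mem : ∀ s : S, s ∈ SList
  S0 : Set S
  F : Set S
  E : List (S × Sig × S × Set (Fin k) × CC k)

/-- `τᵢ` : the time stamp before the `i`-th step (`τ₀ = 0`). -/
def timeAt {Sig : Type} (w : List (Sig × ℝ)) : ℕ → ℝ
  | 0 => 0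
  | i + 1 => (w.map Prod.snd).getD i 0

/-- `0 ≤ τ₁ < τ₂ < …`. -/
def IsTimedWord {Sig : Type} (w : List (Sig × ℝ)) : Prop :=
  (∀ h : 0 < w.length, 0 ≤ (w.get ⟨0, h⟩).2) ∧
    List.Chain' (· < ·) (w.map Prod.snd)

namespace TimedAuto

variable {Sig : Type} {k : ℕ} (T : TimedAuto Sig k)

/-- `T` has an accepting run over the timed word `w`. -/
def Accepts (w : List (Sig × ℝ)) : Prop :=
  ∃ r : ℕ → T.S × (Fin k → ℝ),
    (r 0).1 ∈ T.S0 ∧ ((r 0).2 = fun _ => 0) ∧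
    (∀ i : Fin w.length,
      ∃ e ∈ T.E,
        e.1 = (r i.val).1 ∧ e.2.1 = (w.get i).1 ∧ e.2.2.1 = (r (i.val + 1)).1 ∧
        CC.sat (fun c => (r i.val).2 c + (timeAt w (i.val + 1) - timeAt w i.val))
          e.2.2.2.2 ∧
        ∀ c : Fin k, (r (i.val + 1)).2 c =
          if c ∈ e.2.2.2.1 then 0
          else (r i.val).2 c + (timeAt w (i.val + 1) - timeAt w i.val)) ∧
    (r w.length).1 ∈ T.F

def Lang : Set (List (Sig × ℝ)) := {w | IsTimedWord w ∧ T.Accepts w}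

/-- The first-order alternating automaton `A_T` associated with a timed automaton `T` :
predicates of arity `k+1` (the `k` values `yᵢ` tracking `t − xᵢ` plus the time stamp `z`
of the previous event), one input variable `t`. -/
def toFOAA : FOAA Sig Unit ℝ where
  Q := T.S
  QList := T.SList
  QList_mem := T.SList_mem
  ar := fun _ => k + 1
  init := Fml.disj <|
    (T.SList.filter fun s => decide (s ∈ T.S0)).map fun s =>
      .pred s fun _ => Term.const 0
  init_pos := by
    apply Fml.polarity_disj
    intro φ hφ
    simp only [List.mem_map] at hφ
    obtain ⟨s, -, rfl⟩ := hφ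
    exact rfl
  F := T.F
  delta := fun s a =>
    Fml.disj <|
      (T.E.filter fun e => decide (e.1 = s ∧ e.2.1 = a)).map fun e =>
        .and
          (.eq (Term.app (n := 2) (fun v => if v 0 < v 1 then 1 else 0)
              ![Term.var (Sum.inr (Fin.last k)), Term.var (Sum.inl ())])
            (Term.const 1))
          (.and
            (e.2.2.2.2.toFml fun i =>
              Term.app (n := 2) (fun v => v 0 - v 1)
                ![Term.var (Sum.inr (Fin.last k)), Term.var (Sum.inr i.castSucc)])
            (.pred e.2.2.1 fun i =>
              Fin.lastCases (Term.var (Sum.inl ()))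
                (fun c =>
                  if c ∈ e.2.2.2.1 then Term.var (Sum.inr (Fin.last k))
                  else Term.var (Sum.inr c.castSucc))
                i))
  delta_pos := by
    intro s a
    apply Fml.polarity_disj
    intro φ hφ
    simp only [List.mem_map] at hφ
    obtain ⟨e, -, rfl⟩ := hφ
    exact ⟨trivial, CC.polarity_toFml _ _ true, rfl⟩

end TimedAuto

/-- The encoding `d(w)` of a timed word as a data word. -/
def encodeTimed {Sig : Type} (w : List (Sig × ℝ)) : DWord Sig Unit ℝ :=
  w.map fun p => (p.1, fun _ => p.2)

/-! ### Register automata -/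

/-- A finite-memory (register) automaton with `r` registers over the infinite alphabet `A`;
`none` plays the role of the symbol `#`. -/
structure RegAuto (A : Type) (r : ℕ) : Type 1 where
  S : Type
  SList : List S
  SList_mem : ∀ s : S, s ∈ SList
  s0 : S
  u0 : Fin r → Option A
  u0_distinct : ∀ i j : Fin r, i ≠ j → u0 i = u0 j → u0 i = none
  rho : S → Option (Fin r)
  mu : List (S × Fin r × S)
  F : Set S

namespace RegAuto

variable {A : Type} {r : ℕ} (R : RegAuto A r)

def Accepts (word : List A) : Prop :=
  ∃ v : ℕ → R.S × (Fin r → Option A),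
    v 0 = (R.s0, R.u0) ∧
    (∀ i : Fin word.length,
      ((∃ kk : Fin r, (v i.val).2 kk = some (word.get i) ∧
          (v (i.val + 1)).2 = (v i.val).2 ∧
          ((v i.val).1, kk, (v (i.val + 1)).1) ∈ R.mu) ∨
        ((∀ kk : Fin r, (v i.val).2 kk ≠ some (word.get i)) ∧
          ∃ kk : Fin r, R.rho (v i.val).1 = some kk ∧
            (v (i.val + 1)).2 kk = some (word.get i) ∧
            (∀ kk' : Fin r, kk' ≠ kk → (v (i.val + 1)).2 kk' = (v i.val).2 kk') ∧
            ((v i.val).1, kk, (v (i.val + 1)).1) ∈ R.mu))) ∧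
    (v word.length).1 ∈ R.F

def Lang : Set (List A) := {u | R.Accepts u}

/-- The first-order alternating automaton `A_R` associated with a register automaton `R` :
a single input event, one input variable `x`, predicates of arity `r`, over the data
domain `Option A` (where `none` encodes `#`). -/
def toFOAA : FOAA Unit Unit (Option A) where
  Q := R.S
  QList := R.SList
  QList_mem := R.SList_mem
  ar := fun _ => r
  init := .pred R.s0 fun i => Term.const (R.u0 i)
  init_pos := rfl
  F := R.F
  delta := fun s _ =>
    Fml.disj <|
      (R.mu.filter fun m => decide (m.1 = s)).map fun m =>
        Fml.or
          (.and (.eq (Term.var (Sum.inr m.2.1)) (Term.var (Sum.inl ())))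
            (.pred m.2.2 fun i => Term.var (Sum.inr i)))
          (.and
            (Fml.conj <| (List.finRange r).map fun i =>
              .not (.eq (Term.var (Sum.inl ())) (Term.var (Sum.inr i))))
            (.pred m.2.2 fun i =>
              if i = m.2.1 then Term.var (Sum.inl ()) else Term.var (Sum.inr i)))
  delta_pos := by
    intro s a
    apply Fml.polarity_disj
    intro φ hφ
    simp only [List.mem_map] at hφ
    obtain ⟨m, -, rfl⟩ := hφ
    refine Fml.polarity_or ⟨trivial, rfl⟩ ⟨?_, rfl⟩
    apply Fml.polarity_conj
    intro ψ hψ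
    simp only [List.mem_map] at hψ
    obtain ⟨i, -, rfl⟩ := hψ
    exact trivial

end RegAuto

/-- The encoding of a word over the alphabet `A` as a data word. -/
def encodeReg {A : Type} (u : List A) : DWord Unit Unit (Option A) :=
  u.map fun a => ((), fun _ => some a)

end FOADA

namespace FOADA

section Aux

variable {D Q : Type} {ar : Q → ℕ}

theorem term_eval_rename {V W : Type} (f : V → W) (ν : W → D) :
    ∀ t : Term D V, (t.rename f).eval ν = t.eval (ν ∘ f)
  | .var v => rfl
  | .app g ts => by
      simp only [Term.rename, Term.eval]
      exact congrArg g (funext fun i => term_eval_rename f ν (ts i))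

theorem term_eval_subst {V W : Type} (σ : V → Term D W) (ν : W → D) :
    ∀ t : Term D V, (t.subst σ).eval ν = t.eval fun v => (σ v).eval ν
  | .var v => rfl
  | .app g ts => by
      simp only [Term.subst, Term.eval]
      exact congrArg g (funext fun i => term_eval_subst σ ν (ts i))

theorem sat_rename (I : Interp D Q ar) :
    ∀ {V W : Type} (f : V → W) (φ : Fml D Q ar V) (ν : W → D),
      (φ.rename f).Sat I ν ↔ φ.Sat I (ν ∘ f)
  | _, _, f, .eq t s, ν => by
      simp only [Fml.rename, Fml.Sat, term_eval_rename]
  | _, _, f, .pred q ts, ν => by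
      simp only [Fml.rename, Fml.Sat, term_eval_rename]
  | _, _, f, .not φ, ν => by
      simp only [Fml.rename, Fml.Sat, sat_rename I f φ ν]
  | _, _, f, .and φ ψ, ν => by
      simp only [Fml.rename, Fml.Sat, sat_rename I f φ ν, sat_rename I f ψ ν]
  | _, _, f, .ex φ, ν => by
      simp only [Fml.rename, Fml.Sat]
      refine exists_congr fun d => ?_
      rw [sat_rename I (Option.map f) φ]
      refine iff_of_eq (congrArg _ (funext fun o => ?_))
      cases o <;> rfl

theorem sat_substVar (I : Interp D Q ar) :
    ∀ {V W : Type} (σ : V → Term D W) (φ : Fml D Q ar V) (ν : W → D),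
      (φ.substVar σ).Sat I ν ↔ φ.Sat I fun v => (σ v).eval ν
  | _, _, σ, .eq t s, ν => by
      simp only [Fml.substVar, Fml.Sat, term_eval_subst]
  | _, _, σ, .pred q ts, ν => by
      simp only [Fml.substVar, Fml.Sat, term_eval_subst]
  | _, _, σ, .not φ, ν => by
      simp only [Fml.substVar, Fml.Sat, sat_substVar I σ φ ν]
  | _, _, σ, .and φ ψ, ν => by
      simp only [Fml.substVar, Fml.Sat, sat_substVar I σ φ ν, sat_substVar I σ ψ ν]
  | _, _, σ, .ex φ, ν => by
      simp only [Fml.substVar, Fml.Sat]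
      refine exists_congr fun d => ?_
      rw [sat_substVar I _ φ]
      refine iff_of_eq (congrArg _ (funext fun o => ?_))
      cases o with
      | none => rfl
      | some v =>
          show ((σ v).rename some).eval _ = _
          rw [term_eval_rename]
          rfl

theorem sat_conj [Nonempty D] (I : Interp D Q ar) {V : Type} :
    ∀ (l : List (Fml D Q ar V)) (ν : V → D),
      (Fml.conj l).Sat I ν ↔ ∀ φ ∈ l, φ.Sat I ν
  | [], ν => by simp [Fml.conj, Fml.tt, Fml.Sat]
  | φ :: l, ν => by
      simp only [Fml.conj, Fml.Sat, sat_conj I l ν, List.mem_cons]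
      constructor
      · rintro ⟨h1, h2⟩ ψ (rfl | hψ)
        · exact h1
        · exact h2 ψ hψ
      · intro h
        exact ⟨h φ (Or.inl rfl), fun ψ hψ => h ψ (Or.inr hψ)⟩

theorem sat_exN (I : Interp D Q ar) {V : Type} :
    ∀ {k : ℕ} (φ : Fml D Q ar (V ⊕ Fin k)) (ν : V → D),
      (Fml.exN φ).Sat I ν ↔ ∃ d : Fin k → D, φ.Sat I (Sum.elim ν d)
  | 0, φ, ν => by
      simp only [Fml.exN, sat_rename]
      constructor
      · intro h
        refine ⟨Fin.elim0, ?_⟩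
        convert h using 2
        funext v; cases v with
        | inl v => rfl
        | inr i => exact i.elim0
      · rintro ⟨d, hd⟩
        convert hd using 2
        funext v; cases v with
        | inl v => rfl
        | inr i => exact i.elim0
  | k + 1, φ, ν => by
      rw [Fml.exN, sat_exN I _ ν]
      simp only [Fml.Sat, sat_rename]
      constructor
      · rintro ⟨d, e, hd⟩
        refine ⟨Fin.snoc d e, ?_⟩
        convert hd using 2
        funext v; cases v with
        | inl v => rfl
        | inr j =>
            refine Fin.lastCases ?_ (fun i => ?_) j
            · simp [Fin.snoc_last]
            · simp [Fin.snoc_castSucc]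
      · rintro ⟨d, hd⟩
        refine ⟨Fin.init d, d (Fin.last k), ?_⟩
        convert hd using 2
        funext v; cases v with
        | inl v => rfl
        | inr j =>
            refine Fin.lastCases ?_ (fun i => ?_) j
            · simp
            · simp [Fin.init]

theorem sat_allN (I : Interp D Q ar) {V : Type} {k : ℕ}
    (φ : Fml D Q ar (V ⊕ Fin k)) (ν : V → D) :
    (Fml.allN φ).Sat I ν ↔ ∀ d : Fin k → D, φ.Sat I (Sum.elim ν d) := by
  simp only [Fml.allN, Fml.Sat, sat_exN]
  push_neg
  simp only [Fml.Sat, not_not]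

theorem sat_noPredOcc (q : Q) (I J : Interp D Q ar)
    (hqI : ∀ q' : Q, q' ≠ q → J q' = I q') :
    ∀ {V : Type} (φ : Fml D Q ar V), φ.noPredOcc q →
      ∀ ν : V → D, (φ.Sat J ν ↔ φ.Sat I ν)
  | _, .eq t s, _, ν => Iff.rfl
  | _, .pred q' ts, h, ν => by
      simp only [Fml.Sat, hqI q' h]
  | _, .not φ, h, ν => by
      simp only [Fml.Sat, sat_noPredOcc q I J hqI φ h ν]
  | _, .and φ ψ, h, ν => by
      simp only [Fml.Sat, sat_noPredOcc q I J hqI φ h.1 ν,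
        sat_noPredOcc q I J hqI ψ h.2 ν]
  | _, .ex φ, h, ν => by
      simp only [Fml.Sat]
      exact exists_congr fun d => sat_noPredOcc q I J hqI φ h _

theorem qf_sat_congr {V : Type} (I J : Interp D Q ar) (ν : V → D) :
    ∀ φ : QF D Q ar V,
      (∀ a ∈ φ.atoms, ((fun i => (a.2 i).eval ν) ∈ J a.1 ↔ (fun i => (a.2 i).eval ν) ∈ I a.1)) →
      (φ.toFml.Sat J ν ↔ φ.toFml.Sat I ν)
  | .eq t s, _ => Iff.rfl
  | .pred q' ts, h => h ⟨q', ts⟩ (List.mem_singleton_self _)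
  | .not φ, h => by
      simp only [QF.toFml, Fml.Sat, qf_sat_congr I J ν φ h]
  | .and φ ψ, h => by
      simp only [QF.toFml, Fml.Sat]
      rw [qf_sat_congr I J ν φ fun a ha => h a (List.mem_append_left _ ha),
        qf_sat_congr I J ν ψ fun a ha => h a (List.mem_append_right _ ha)]

end Aux

end FOADA

namespace FOADA

/-- Fact in the proof of Lemma 3. -/
theorem statement_4 {D Q : Type} [Nonempty D] {ar : Q → ℕ} [DecidableEq Q] {V : Type}
    (q : Q) (φ : QF D Q ar V) (ψ : Fml D Q ar (V ⊕ Fin (ar q)))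
    (hψ : ψ.noPredOcc q) (ν : V → D) (I : Interp D Q ar)
    (h : (Fml.and φ.toFml
        (Fml.conj (φ.atoms.map fun a =>
          if h' : a.1 = q then
            Fml.imp (.pred a.1 a.2)
              (ψ.substVar (Sum.elim Term.var fun i =>
                a.2 (Fin.cast (congrArg ar h'.symm) i)))
          else Fml.tt))).Sat I ν) :
    ∃ J : Interp D Q ar, J q ⊆ I q ∧ (∀ q' : Q, q' ≠ q → J q' = I q') ∧
      (Fml.and φ.toFml
        (Fml.allN (Fml.imp (.pred q fun i => Term.var (Sum.inr i)) ψ))).Sat J ν := by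
  classical
  obtain ⟨hφ, hc⟩ := h
  set S : Set (Fin (ar q) → D) := {d | d ∈ I q ∧ ψ.Sat I (Sum.elim ν d)} with hS
  set J : Interp D Q ar := Function.update I q S with hJ
  have hJq : J q = S := Function.update_self q S I
  have hJne : ∀ q' : Q, q' ≠ q → J q' = I q' :=
    fun q' hq' => Function.update_of_ne hq' S I
  have hatom : ∀ ts : Fin (ar q) → Term D V,
      (⟨q, ts⟩ : Σ q' : Q, Fin (ar q') → Term D V) ∈ φ.atoms →
      (fun i => (ts i).eval ν) ∈ I q →
      ψ.Sat I (Sum.elim ν fun i => (ts i).eval ν) := by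
    intro ts hmem hIq
    have hm := (sat_conj I _ ν).mp hc _ (List.mem_map_of_mem hmem)
    rw [dif_pos rfl] at hm
    simp only [Fml.imp, Fml.Sat, sat_substVar, not_and, not_not] at hm
    have h2 := hm hIq
    convert h2 using 1
    funext v
    cases v with
    | inl v => rfl
    | inr i =>
        show (ts i).eval ν = (ts (Fin.cast _ i)).eval ν
        congr 1
  have hsub : J q ⊆ I q := by
    rw [hJq]; exact fun d hd => hd.1
  refine ⟨J, hsub, hJne, ?_, ?_⟩
  · refine (qf_sat_congr I J ν φ fun a ha => ?_).mpr hφ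
    by_cases hq' : a.1 = q
    · obtain ⟨q1, ts⟩ := a
      dsimp only at hq'
      subst hq'
      rw [hJq]
      exact ⟨fun hd => hd.1, fun hd => ⟨hd, hatom ts ha hd⟩⟩
    · rw [hJne a.1 hq']
  · rw [sat_allN]
    intro d
    simp only [Fml.imp, Fml.Sat, not_and, not_not]
    intro hmem
    have hd : (fun i => d i) ∈ J q := hmem
    rw [hJq] at hd
    have hd' : d ∈ S := by simpa using hd
    exact (sat_noPredOcc q I J hJne ψ hψ _).mpr hd'.2

end FOADA
end
end

section
/- Let φ be a positive first-order formula in which q(t₁,…,t_{#q}) is the only occurrence of the predicate symbol q, and let ψ(y₁,…,y_{#q}) be a formula in which no predicate atom with symbol q occurs. Then for each interpretation I and valuation ν: I, ν ⊨ φ ∧ (q(t₁,…,t_{#q}) → ψ[t₁/y₁,…,t_{#q}/y_{#q}]) holds for some interpretation of q if and only if ν together with I restricted to the other predicates satisfies φ[ψ[t₁/y₁,…,t_{#q}/y_{#q}] / q(t₁,…,t_{#q})] (the formula φ with the atom q(t̄) replaced by ψ[t̄/ȳ]). Precisely: (⇒) for all I, ν, if I, ν ⊨ φ ∧ (q(t̄)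 → ψ[t̄/ȳ]) then I, ν ⊨ φ[ψ[t̄/ȳ]/q(t̄)]; (⇐) for all I, ν, if I, ν ⊨ φ[ψ[t̄/ȳ]/q(t̄)] then there is an interpretation I' agreeing with I on all predicates except q such that I', ν ⊨ φ ∧ (q(t̄) → ψ[t̄/ȳ]). -/
set_option maxHeartbeats 1000000
set_option autoImplicit false

open scoped Classical

noncomputable section

namespace FOADA

section Aux

variable {D Q : Type} {ar : Q → ℕ}

theorem aux_eval_rename {V W : Type} (f : V → W) (ν : W → D) :
    ∀ t : Term D V, (t.rename f).eval ν = t.eval (fun v => ν (f v))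
  | .var v => rfl
  | .app g ts => congrArg g (funext fun i => aux_eval_rename f ν (ts i))

theorem aux_eval_subst {V W : Type} (σ : V → Term D W) (ν : W → D) :
    ∀ t : Term D V, (t.subst σ).eval ν = t.eval (fun v => (σ v).eval ν)
  | .var v => rfl
  | .app g ts => congrArg g (funext fun i => aux_eval_subst σ ν (ts i))

theorem aux_sat_substVar (I : Interp D Q ar) :
    ∀ {V W : Type} (φ : Fml D Q ar V) (σ : V → Term D W) (ν : W → D),
      (φ.substVar σ).Sat I ν ↔ φ.Sat I (fun v => (σ v).eval ν)
  | _, _, .eq t s, σ, ν => by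
      simp [Fml.substVar, Fml.Sat, aux_eval_subst]
  | _, _, .pred q ts, σ, ν => by
      simp [Fml.substVar, Fml.Sat, aux_eval_subst]
  | _, _, .not φ, σ, ν => by
      simp [Fml.substVar, Fml.Sat, aux_sat_substVar I φ σ ν]
  | _, _, .and φ ψ, σ, ν => by
      simp [Fml.substVar, Fml.Sat, aux_sat_substVar I φ σ ν, aux_sat_substVar I ψ σ ν]
  | _, _, .ex φ, σ, ν => by
      simp only [Fml.substVar, Fml.Sat]
      refine exists_congr fun d => ?_
      rw [aux_sat_substVar I φ _ _]
      apply iff_of_eq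
      congr 1
      funext o
      cases o with
      | none => rfl
      | some v =>
          show ((σ v).rename some).eval (fun o => o.elim d ν) = (σ v).eval ν
          rw [aux_eval_rename]; rfl

theorem aux_sat_toFml (I : Interp D Q ar) {V : Type} (ν : V → D) :
    ∀ φ : QF D Q ar V, φ.toFml.Sat I ν ↔ φ.Sat I ν
  | .eq t s => Iff.rfl
  | .pred q ts => Iff.rfl
  | .not φ => by simp [QF.toFml, Fml.Sat, QF.Sat, aux_sat_toFml I ν φ]
  | .and φ ψ => by
      simp [QF.toFml, Fml.Sat, QF.Sat, aux_sat_toFml I ν φ, aux_sat_toFml I ν ψ]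

theorem aux_sat_noPred (q0 : Q) :
    ∀ {V : Type} (φ : Fml D Q ar V), φ.noPredOcc q0 →
      ∀ (I J : Interp D Q ar), (∀ q' ≠ q0, I q' = J q') →
      ∀ ν : V → D, (φ.Sat I ν ↔ φ.Sat J ν)
  | _, .eq t s, _, _, _, _, _ => Iff.rfl
  | _, .pred q ts, h, I, J, hag, ν => by
      simp only [Fml.Sat]
      rw [hag q h]
  | _, .not φ, h, I, J, hag, ν => by
      simp [Fml.Sat, aux_sat_noPred q0 φ h I J hag ν]
  | _, .and φ ψ, h, I, J, hag, ν => by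
      simp [Fml.Sat, aux_sat_noPred q0 φ h.1 I J hag ν, aux_sat_noPred q0 ψ h.2 I J hag ν]
  | _, .ex φ, h, I, J, hag, ν => by
      simp only [Fml.Sat]
      exact exists_congr fun d => aux_sat_noPred q0 φ h I J hag _

theorem aux_qf_sat_congr {V : Type} (I J : Interp D Q ar) (ν : V → D) :
    ∀ φ : QF D Q ar V,
      (∀ a ∈ φ.atoms,
        ((fun i => (a.2 i).eval ν) ∈ I a.1 ↔ (fun i => (a.2 i).eval ν) ∈ J a.1)) →
      (φ.Sat I ν ↔ φ.Sat J ν)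
  | .eq t s, _ => Iff.rfl
  | .pred q ts, h => h ⟨q, ts⟩ (by simp [QF.atoms])
  | .not φ, h => by
      simp [QF.Sat, aux_qf_sat_congr I J ν φ h]
  | .and φ ψ, h => by
      have h1 := aux_qf_sat_congr I J ν φ fun a ha => h a (by simp [QF.atoms, ha])
      have h2 := aux_qf_sat_congr I J ν ψ fun a ha => h a (by simp [QF.atoms, ha])
      simp [QF.Sat, h1, h2]

variable [DecidableEq Q]

theorem aux_repl1 {V : Type} (q0 : Q) (χ : (Fin (ar q0) → Term D V) → Fml D Q ar V)
    (I J : Interp D Q ar) (ν : V → D)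
    (hpred : ∀ ts' : Fin (ar q0) → Term D V,
      (fun i => (ts' i).eval ν) ∈ J q0 → (χ ts').Sat I ν)
    (hag : ∀ q' ≠ q0, J q' = I q') :
    ∀ (φ : QF D Q ar V) (b : Bool), φ.Polarity b →
      ((b = true → φ.Sat J ν → (φ.replaceAtom q0 χ).Sat I ν) ∧
       (b = false → (φ.replaceAtom q0 χ).Sat I ν → φ.Sat J ν))
  | .eq t s, b, _ => ⟨fun _ h => h, fun _ h => h⟩
  | .pred q ts', b, hb => by
      refine ⟨fun _ h => ?_, fun hbf => by rw [hbf] at hb; exact absurd hb (by simp [QF.Polarity])⟩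
      by_cases hq : q = q0
      · subst hq
        simp only [QF.replaceAtom, dif_pos]
        have : (fun i => (ts' (Fin.cast rfl i)) ) = ts' := by funext i; rfl
        exact this ▸ hpred ts' h
      · simp only [QF.replaceAtom, dif_neg hq]
        show (fun i => (ts' i).eval ν) ∈ I q
        rw [← hag q hq]; exact h
  | .not φ, b, hb => by
      have ih := aux_repl1 q0 χ I J ν hpred hag φ (!b) hb
      constructor
      · rintro rfl h hr
        exact h (ih.2 rfl hr)
      · rintro rfl h hs
        exact h (ih.1 rfl hs)
  | .and φ ψ, b, hb => by
      have ih1 := aux_repl1 q0 χ I J ν hpred hag φ b hb.1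
      have ih2 := aux_repl1 q0 χ I J ν hpred hag ψ b hb.2
      exact ⟨fun hbt h => ⟨ih1.1 hbt h.1, ih2.1 hbt h.2⟩,
        fun hbf h => ⟨ih1.2 hbf h.1, ih2.2 hbf h.2⟩⟩

theorem aux_repl2 {V : Type} (q0 : Q) (χ : (Fin (ar q0) → Term D V) → Fml D Q ar V)
    (I J : Interp D Q ar) (ν : V → D)
    (hpred : ∀ ts' : Fin (ar q0) → Term D V,
      (χ ts').Sat I ν → (fun i => (ts' i).eval ν) ∈ J q0)
    (hag : ∀ q' ≠ q0, J q' = I q') :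
    ∀ (φ : QF D Q ar V) (b : Bool), φ.Polarity b →
      ((b = true → (φ.replaceAtom q0 χ).Sat I ν → φ.Sat J ν) ∧
       (b = false → φ.Sat J ν → (φ.replaceAtom q0 χ).Sat I ν))
  | .eq t s, b, _ => ⟨fun _ h => h, fun _ h => h⟩
  | .pred q ts', b, hb => by
      refine ⟨fun _ h => ?_, fun hbf => by rw [hbf] at hb; exact absurd hb (by simp [QF.Polarity])⟩
      by_cases hq : q = q0
      · subst hq
        simp only [QF.replaceAtom, dif_pos] at h
        have : (fun i => (ts' (Fin.cast rfl i)) ) = ts' := by funext i; rfl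
        exact hpred ts' (this ▸ h)
      · simp only [QF.replaceAtom, dif_neg hq] at h
        show (fun i => (ts' i).eval ν) ∈ J q
        rw [hag q hq]; exact h
  | .not φ, b, hb => by
      have ih := aux_repl2 q0 χ I J ν hpred hag φ (!b) hb
      constructor
      · rintro rfl h hs
        exact h (ih.2 rfl hs)
      · rintro rfl h hr
        exact h (ih.1 rfl hr)
  | .and φ ψ, b, hb => by
      have ih1 := aux_repl2 q0 χ I J ν hpred hag φ b hb.1
      have ih2 := aux_repl2 q0 χ I J ν hpred hag ψ b hb.2
      exact ⟨fun hbt h => ⟨ih1.1 hbt h.1, ih2.1 hbt h.2⟩,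
        fun hbf h => ⟨ih1.2 hbf h.1, ih2.2 hbf h.2⟩⟩

theorem aux_chi_iff {V : Type} (I : Interp D Q ar) (ν : V → D) {k : ℕ}
    (ψ : Fml D Q ar (V ⊕ Fin k)) (ts' : Fin k → Term D V) :
    (ψ.substVar (Sum.elim Term.var ts')).Sat I ν ↔
      ψ.Sat I (Sum.elim ν (fun i => (ts' i).eval ν)) := by
  rw [aux_sat_substVar]
  apply iff_of_eq
  congr 1
  funext v
  cases v <;> rfl

end Aux

/-- Fact in the proof of Lemma 4. -/
theorem statement_6 {D Q : Type} [Nonempty D] {ar : Q → ℕ} [DecidableEq Q] {V : Type}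
    (q : Q) (φ : QF D Q ar V) (ts : Fin (ar q) → Term D V)
    (ψ : Fml D Q ar (V ⊕ Fin (ar q)))
    (hpos : φ.Positive)
    (honly : φ.atoms.filter (fun a => decide (a.1 = q)) = [⟨q, ts⟩])
    (hψ : ψ.noPredOcc q) :
    (∀ (I : Interp D Q ar) (ν : V → D),
      (Fml.and φ.toFml
        (Fml.imp (.pred q ts) (ψ.substVar (Sum.elim Term.var ts)))).Sat I ν →
      (φ.replaceAtom q fun ts' => ψ.substVar (Sum.elim Term.var ts')).Sat I ν) ∧
    (∀ (I : Interp D Q ar) (ν : V → D),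
      (φ.replaceAtom q fun ts' => ψ.substVar (Sum.elim Term.var ts')).Sat I ν →
      ∃ I' : Interp D Q ar, (∀ q' : Q, q' ≠ q → I' q' = I q') ∧
        (Fml.and φ.toFml
          (Fml.imp (.pred q ts) (ψ.substVar (Sum.elim Term.var ts)))).Sat I' ν) := by
  have hatom : ∀ a ∈ φ.atoms, a.1 = q → a = ⟨q, ts⟩ := by
    intro a ha haq
    have : a ∈ φ.atoms.filter (fun a => decide (a.1 = q)) :=
      List.mem_filter.mpr ⟨ha, by simp [haq]⟩
    rw [honly] at this
    simpa using this
  constructor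
  · -- forward direction
    intro I ν h
    obtain ⟨h1, h2⟩ := h
    have hqc : (fun i => (ts i).eval ν) ∈ I q →
        (ψ.substVar (Sum.elim Term.var ts)).Sat I ν := by
      intro hp
      by_contra hc
      exact h2 ⟨hp, hc⟩
    set J : Interp D Q ar :=
      Function.update I q {d | d ∈ I q ∧ ψ.Sat I (Sum.elim ν d)} with hJ
    have hJq : J q = {d | d ∈ I q ∧ ψ.Sat I (Sum.elim ν d)} := Function.update_self _ _ _
    have hag : ∀ q' ≠ q, J q' = I q' := fun q' hq' => Function.update_of_ne hq' _ _
    have hpred : ∀ ts' : Fin (ar q) → Term D V,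
        (fun i => (ts' i).eval ν) ∈ J q →
        ((fun ts' => ψ.substVar (Sum.elim Term.var ts')) ts').Sat I ν := by
      intro ts' hmem
      rw [hJq] at hmem
      exact (aux_chi_iff I ν ψ ts').mpr hmem.2
    have hSatJ : φ.Sat J ν := by
      refine (aux_qf_sat_congr I J ν φ ?_).mp ((aux_sat_toFml I ν φ).mp h1)
      intro a ha
      by_cases haq : a.1 = q
      · have := hatom a ha haq
        subst this
        rw [hJq]
        constructor
        · intro hm
          exact ⟨hm, (aux_chi_iff I ν ψ ts).mp (hqc hm)⟩
        · exact fun hm => hm.1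
      · rw [hag a.1 haq]
    exact (aux_repl1 q (fun ts' => ψ.substVar (Sum.elim Term.var ts')) I J ν hpred hag
      φ true hpos).1 rfl hSatJ
  · -- backward direction
    intro I ν h
    set J : Interp D Q ar :=
      Function.update I q {d | ψ.Sat I (Sum.elim ν d)} with hJ
    have hJq : J q = {d | ψ.Sat I (Sum.elim ν d)} := Function.update_self _ _ _
    have hag : ∀ q' ≠ q, J q' = I q' := fun q' hq' => Function.update_of_ne hq' _ _
    have hpred : ∀ ts' : Fin (ar q) → Term D V,
        ((fun ts' => ψ.substVar (Sum.elim Term.var ts')) ts').Sat I ν →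
        (fun i => (ts' i).eval ν) ∈ J q := by
      intro ts' hs
      rw [hJq]
      exact (aux_chi_iff I ν ψ ts').mp hs
    have hSatJ : φ.Sat J ν :=
      (aux_repl2 q (fun ts' => ψ.substVar (Sum.elim Term.var ts')) I J ν hpred hag
        φ true hpos).1 rfl h
    have hψIJ : ∀ μ, ψ.Sat I μ ↔ ψ.Sat J μ :=
      fun μ => aux_sat_noPred q ψ hψ I J (fun q' hq' => (hag q' hq').symm) μ
    refine ⟨J, hag, (aux_sat_toFml J ν φ).mpr hSatJ, ?_⟩
    rintro ⟨hp, hc⟩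
    apply hc
    have hmem : (fun i => (ts i).eval ν) ∈ J q := hp
    rw [hJq] at hmem
    exact (aux_chi_iff J ν ψ ts).mpr ((hψIJ _).mp hmem)

end FOADA
end
end
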